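/- arXiv:1412.2435 — 3 statements merged into one kernel-verified Lean document; each statement's English description precedes it below -/
import Mathlib

section
/- Let t be a real number with 0 < t < 1/n. Then the polytope of n×n real matrices x = (x_{ij}) satisfying x_{ij} ≥ 0 for all i,j, row sums Σ_{j=1}^n x_{ij} = 1 − t for every i = 1,…,n, and column sums Σ_{i=1}^n x_{ij} = 1 for j = 1,…,n−1 and Σ_{i=1}^n x_{in} = 1 − n·t, is non-degenerate; that is, every vertex of this polytope has exactly 2n − 1 nonzero (positive) entries. -/
/-!
View the set `E` of positive entries of a vertex `x` as the edge set of a bipartite graph on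
rows ⊔ columns. An extreme point admits no nonzero perturbation supported on `E` with zero row
and column sums, so the columns of the incidence matrix of `E` are independent (`E` is a forest).
If `x` vanishes between a row set `A` and the complement of a column set `B` and vice versa, the
margins of `A` and of `B` have equal totals; when this only happens for `A = ∅` or for all rows
against all columns, the only potentials `(u, v)` with `u i + v j = 0` along `E` are multiples
of `(1, -1)` (`E` is connected). Rank–nullity for the transposed incidence matrix then gives
`#E = #rows + #columns - 1`.

For the perturbed margins, `#A (1 - t) = #B - [last column ∈ B] n t` with `0 < #A t ≤ n t < 1`
forces `#A = #B`, then `#A = n`.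
-/

open Finset Matrix Filter Topology

lemma Nat.eq_of_abs_cast_sub_lt_one {m k : ℕ} (h : |(m : ℝ) - k| < 1) : m = k := by
  have : |(m : ℤ) - k| < 1 := by exact_mod_cast h
  rw [abs_lt] at this
  omega

variable {ι κ : Type*} [Fintype ι] [Fintype κ]

def transportationPolytope (a : ι → ℝ) (b : κ → ℝ) : Set (Matrix ι κ ℝ) :=
  {x | (∀ i j, 0 ≤ x i j) ∧ (∀ i, ∑ j, x i j = a i) ∧ ∀ j, ∑ i, x i j = b j}

noncomputable def positiveEntries (x : Matrix ι κ ℝ) : Finset (ι × κ) := {p | 0 < x p.1 p.2}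

def IsNondegenerateMargins (a : ι → ℝ) (b : κ → ℝ) : Prop :=
  ∀ (A : Finset ι) (B : Finset κ), A.Nonempty → ∑ i ∈ A, a i = ∑ j ∈ B, b j → A = univ ∧ B = univ

def bipartiteIncidenceMatrix [DecidableEq ι] [DecidableEq κ] (E : Finset (ι × κ)) :
    Matrix (ι ⊕ κ) E ℝ :=
  fromRows (of fun i e => if e.1.1 = i then 1 else 0) (of fun j e => if e.1.2 = j then 1 else 0)

namespace bipartiteIncidenceMatrix

variable [DecidableEq ι] [DecidableEq κ] {E : Finset (ι × κ)}

lemma transpose_mulVec_apply (w : ι ⊕ κ → ℝ) (e : E) :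
    ((bipartiteIncidenceMatrix E)ᵀ *ᵥ w) e = w (.inl e.1.1) + w (.inr e.1.2) := by
  simp [bipartiteIncidenceMatrix, mulVec_transpose, vecMul, dotProduct]

lemma mulVec_eq_sumElim {c : E → ℝ} {d : Matrix ι κ ℝ} (hdc : ∀ e : E, d e.1.1 e.1.2 = c e)
    (hdE : ∀ i j, (i, j) ∉ E → d i j = 0) :
    bipartiteIncidenceMatrix E *ᵥ c = Sum.elim (fun i => ∑ j, d i j) (fun j => ∑ i, d i j) := by
  have hsum : ∀ f : ι × κ → ℝ, ∑ e : E, f e.1 * c e = ∑ p, f p * d p.1 p.2 := fun f => by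
    simp_rw [← hdc]
    rw [sum_coe_sort E (fun p => f p * d p.1 p.2)]
    exact sum_subset (subset_univ E) fun p _ hp => by simp [hdE p.1 p.2 hp]
  ext (i | j)
  · simpa [bipartiteIncidenceMatrix, mulVec, dotProduct, Fintype.sum_prod_type]
      using hsum fun p => if p.1 = i then 1 else 0
  · simpa [bipartiteIncidenceMatrix, mulVec, dotProduct, Fintype.sum_prod_type]
      using hsum fun p => if p.2 = j then 1 else 0

theorem card_add_one_eq [Nonempty ι]
    (hinj : ∀ c, bipartiteIncidenceMatrix E *ᵥ c = 0 → c = 0)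
    (hconn : ∀ (u : ι → ℝ) (v : κ → ℝ), (∀ p ∈ E, u p.1 + v p.2 = 0) →
      ∃ a, (∀ i, u i = a) ∧ ∀ j, v j = -a) :
    #E + 1 = Fintype.card ι + Fintype.card κ := by
  set M := bipartiteIncidenceMatrix E
  let g : ι ⊕ κ → ℝ := Sum.elim 1 (-1)
  have hrank : M.rank = #E := by
    have : Function.Injective M.mulVecLin := by
      rw [← LinearMap.ker_eq_bot, LinearMap.ker_eq_bot']
      exact hinj
    rw [Matrix.rank, LinearMap.finrank_range_of_inj this, Module.finrank_fintype_fun_eq_card,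
      Fintype.card_coe]
  have hker : LinearMap.ker Mᵀ.mulVecLin = ℝ ∙ g := by
    apply le_antisymm
    · intro w hw
      obtain ⟨a, hu, hv⟩ := hconn (w ∘ .inl) (w ∘ .inr) fun p hp => by
        have := congrFun (LinearMap.mem_ker.mp hw) ⟨p, hp⟩
        rwa [mulVecLin_apply, transpose_mulVec_apply] at this
      refine Submodule.mem_span_singleton.mpr ⟨a, funext ?_⟩
      rintro (i | j)
      · simpa [g] using (hu i).symm
      · simpa [g] using (hv j).symm
    · rw [Submodule.span_singleton_le_iff_mem, LinearMap.mem_ker]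
      funext e
      rw [mulVecLin_apply, transpose_mulVec_apply]
      simp [g]
  have hg : g ≠ 0 := fun h => by
    simpa [g] using congrFun h (.inl (Classical.arbitrary ι))
  have := LinearMap.finrank_range_add_finrank_ker Mᵀ.mulVecLin
  rwa [hker, finrank_span_singleton hg, ← Matrix.rank, rank_transpose, hrank,
    Module.finrank_fintype_fun_eq_card, Fintype.card_sum] at this

end bipartiteIncidenceMatrix

namespace transportationPolytope

variable {a : ι → ℝ} {b : κ → ℝ} {x d : Matrix ι κ ℝ}

lemma eventually_nonneg_add_mul (hx : ∀ i j, 0 ≤ x i j) (hd : ∀ i j, x i j = 0 → d i j = 0) :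
    ∀ᶠ ε in 𝓝 (0 : ℝ), ∀ i j, 0 ≤ x i j + ε * d i j ∧ 0 ≤ x i j - ε * d i j := by
  simp only [eventually_all]
  intro i j
  rcases (hx i j).eq_or_lt with h | h
  · exact .of_forall fun ε => by simp [← h, hd i j h.symm]
  · have hplus : Tendsto (fun ε : ℝ => x i j + ε * d i j) (𝓝 0) (𝓝 (x i j)) :=
      (by fun_prop : Continuous fun ε : ℝ => x i j + ε * d i j).tendsto' 0 _ (by simp)
    have hminus : Tendsto (fun ε : ℝ => x i j - ε * d i j) (𝓝 0) (𝓝 (x i j)) :=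
      (by fun_prop : Continuous fun ε : ℝ => x i j - ε * d i j).tendsto' 0 _ (by simp)
    exact ((hplus.eventually (lt_mem_nhds h)).and (hminus.eventually (lt_mem_nhds h))).mono
      fun _ h => ⟨h.1.le, h.2.le⟩

lemma add_smul_mem (hx : x ∈ transportationPolytope a b) (hrow : ∀ i, ∑ j, d i j = 0)
    (hcol : ∀ j, ∑ i, d i j = 0) {ε : ℝ} (hε : ∀ i j, 0 ≤ x i j + ε * d i j) :
    x + ε • d ∈ transportationPolytope a b := by
  obtain ⟨-, hxa, hxb⟩ := hx
  refine ⟨hε, fun i => ?_, fun j => ?_⟩ <;>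
    simp [sum_add_distrib, ← mul_sum, hxa, hxb, hrow, hcol]

lemma eq_zero_of_mem_extremePoints (hx : x ∈ (transportationPolytope a b).extremePoints ℝ)
    (hd : ∀ i j, x i j = 0 → d i j = 0) (hrow : ∀ i, ∑ j, d i j = 0)
    (hcol : ∀ j, ∑ i, d i j = 0) : d = 0 := by
  obtain ⟨ε, hnonneg, hε⟩ := (((eventually_nonneg_add_mul hx.1.1 hd).filter_mono
    nhdsWithin_le_nhds).and (self_mem_nhdsWithin (s := Set.Ioi 0))).exists
  have hplus := add_smul_mem hx.1 hrow hcol fun i j => (hnonneg i j).1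
  have hminus := add_smul_mem hx.1 hrow hcol (ε := -ε) fun i j => by
    simpa [neg_mul, ← sub_eq_add_neg] using (hnonneg i j).2
  have hseg : x ∈ openSegment ℝ (x + ε • d) (x + (-ε) • d) :=
    ⟨1 / 2, 1 / 2, by norm_num, by norm_num, by norm_num, by module⟩
  exact (smul_eq_zero.mp (add_eq_left.mp (hx.2 hplus hminus hseg))).resolve_left hε.ne'

lemma eq_zero_of_bipartiteIncidenceMatrix_mulVec_eq_zero [DecidableEq ι] [DecidableEq κ]
    (hx : x ∈ (transportationPolytope a b).extremePoints ℝ) {c : positiveEntries x → ℝ}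
    (hc : bipartiteIncidenceMatrix (positiveEntries x) *ᵥ c = 0) : c = 0 := by
  let d : Matrix ι κ ℝ := fun i j => if h : (i, j) ∈ positiveEntries x then c ⟨(i, j), h⟩ else 0
  have hdc : ∀ e, d e.1.1 e.1.2 = c e := fun e => by simp [d]
  have hdE : ∀ i j, (i, j) ∉ positiveEntries x → d i j = 0 := fun i j h => by simp [d, h]
  rw [bipartiteIncidenceMatrix.mulVec_eq_sumElim hdc hdE] at hc
  have hd0 : d = 0 := eq_zero_of_mem_extremePoints hx
    (fun i j h => hdE i j (by simp [positiveEntries, h]))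
    (fun i => congrFun hc (.inl i)) (fun j => congrFun hc (.inr j))
  funext e
  rw [← hdc e, hd0]
  rfl

lemma sum_eq_sum_of_forall_pos (hx : x ∈ transportationPolytope a b) {A : Finset ι}
    {B : Finset κ} (hAB : ∀ i j, 0 < x i j → (i ∈ A ↔ j ∈ B)) :
    ∑ i ∈ A, a i = ∑ j ∈ B, b j := by
  obtain ⟨hx0, hxa, hxb⟩ := hx
  have hzero : ∀ i j, (i ∈ A ↔ j ∉ B) → x i j = 0 := fun i j h =>
    (hx0 i j).eq_or_lt.elim Eq.symm fun hpos => by have := hAB i j hpos; tauto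
  calc ∑ i ∈ A, a i = ∑ i ∈ A, ∑ j ∈ B, x i j := sum_congr rfl fun i hi => by
        rw [← hxa, sum_subset (subset_univ B) fun j _ hj => hzero i j (by tauto)]
    _ = ∑ j ∈ B, ∑ i ∈ A, x i j := sum_comm
    _ = ∑ j ∈ B, b j := sum_congr rfl fun j hj => by
        rw [← hxb, sum_subset (subset_univ A) fun i _ hi => hzero i j (by tauto)]

lemma exists_eq_of_add_eq_zero [Nonempty ι] (hab : IsNondegenerateMargins a b)
    (hx : x ∈ transportationPolytope a b) {u : ι → ℝ} {v : κ → ℝ}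
    (huv : ∀ i j, 0 < x i j → u i + v j = 0) : ∃ c, (∀ i, u i = c) ∧ ∀ j, v j = -c := by
  classical
  obtain ⟨i₀⟩ := ‹Nonempty ι›
  obtain ⟨hA, hB⟩ := hab {i | u i = u i₀} {j | v j = -u i₀} ⟨i₀, by simp⟩ <|
    sum_eq_sum_of_forall_pos hx fun i j h => by
      simp only [mem_filter, mem_univ, true_and]
      constructor <;> intro <;> linarith [huv i j h]
  exact ⟨u i₀, fun i => by simpa using eq_univ_iff_forall.mp hA i,
    fun j => by simpa using eq_univ_iff_forall.mp hB j⟩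

theorem card_positiveEntries_add_one [Nonempty ι] (hab : IsNondegenerateMargins a b)
    (hx : x ∈ (transportationPolytope a b).extremePoints ℝ) :
    #(positiveEntries x) + 1 = Fintype.card ι + Fintype.card κ := by
  classical
  exact bipartiteIncidenceMatrix.card_add_one_eq
    (fun _ => eq_zero_of_bipartiteIncidenceMatrix_mulVec_eq_zero hx) fun u v huv => exists_eq_of_add_eq_zero hab hx.1 fun i j h =>
      huv (i, j) (by simpa [positiveEntries] using h)

end transportationPolytope

lemma isNondegenerateMargins_perturbed [DecidableEq κ] {t : ℝ} (ht : 0 < t)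
    (htn : Fintype.card ι * t < 1) (hcard : Fintype.card κ = Fintype.card ι) (j₀ : κ) :
    IsNondegenerateMargins (fun _ : ι => 1 - t)
      fun j : κ => if j = j₀ then 1 - Fintype.card ι * t else 1 := by
  intro A B hA hsum
  set n := Fintype.card ι
  have hcol : ∑ j ∈ B, (if j = j₀ then 1 - n * t else 1) = #B - if j₀ ∈ B then n * t else 0 := by
    rw [← sum_ite_eq' B j₀ fun _ => n * t, eq_sub_iff_add_eq, ← sum_add_distrib,
      card_eq_sum_ones, Nat.cast_sum]
    exact sum_congr rfl fun j _ => by split_ifs <;> ring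
  rw [sum_const, nsmul_eq_mul, hcol] at hsum
  have hAn : (#A : ℝ) * t ≤ n * t := by gcongr; exact card_le_univ A
  have hA0 : (0 : ℝ) < #A * t := mul_pos (by exact_mod_cast hA.card_pos) ht
  have hdiff : (#A : ℝ) - #B = #A * t - if j₀ ∈ B then n * t else 0 := by linarith
  have hAB : #A = #B := Nat.eq_of_abs_cast_sub_lt_one <| by
    rw [hdiff, abs_lt]; split_ifs <;> constructor <;> linarith
  rw [hAB, sub_self, eq_comm, sub_eq_zero, ← hAB] at hdiff
  split_ifs at hdiff with hj₀
  · have hA : #A = n := by exact_mod_cast mul_right_cancel₀ ht.ne' hdiff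
    exact ⟨eq_univ_of_card A hA, eq_univ_of_card B (by rw [← hAB, hA, hcard])⟩
  · exact absurd hdiff hA0.ne'

/-- **Non-degeneracy of the perturbed Birkhoff polytope** (Liu, 2013).
For `0 < t < 1/n`, the polytope of `n × n` matrices with nonnegative entries, all row
sums equal to `1 - t`, column sums equal to `1` for the first `n - 1` columns and
`1 - n*t` for the last column, is non-degenerate: every vertex (extreme point) has
exactly `2n - 1` positive entries. -/
theorem perturbed_assignment_polytope_nondegenerate
    (n : ℕ) (hn : 1 ≤ n) (t : ℝ) (ht : 0 < t) (ht' : t < 1 / n)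
    (S : Set (Matrix (Fin n) (Fin n) ℝ))
    (hS : S = {x | (∀ i j, 0 ≤ x i j) ∧ (∀ i, ∑ j, x i j = 1 - t) ∧
      (∀ j : Fin n, ∑ i, x i j = if (j : ℕ) = n - 1 then 1 - n * t else 1)}) :
    ∀ x ∈ Set.extremePoints ℝ S,
      (Finset.univ.filter (fun p : Fin n × Fin n => 0 < x p.1 p.2)).card = 2 * n - 1 := by
  have : Nonempty (Fin n) := ⟨⟨0, hn⟩⟩
  have htn : Fintype.card (Fin n) * t < 1 := by
    rwa [Fintype.card_fin, ← lt_div_iff₀' (by positivity)]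
  have hS' : S = transportationPolytope (fun _ => 1 - t)
      fun j => if j = ⟨n - 1, by omega⟩ then 1 - Fintype.card (Fin n) * t else 1 := by
    rw [hS]; simp [transportationPolytope, Fin.ext_iff]
  intro x hx
  rw [hS'] at hx
  have := transportationPolytope.card_positiveEntries_add_one
    (isNondegenerateMargins_perturbed ht htn rfl _) hx
  simp only [Fintype.card_fin] at this
  show #(positiveEntries x) = 2 * n - 1
  omega
end

section
/- (Optimal Basis Theorem) Let n ≥ 1. Let P be the Birkhoff polytope in R^{n×n}, described by the system A·vec(x) = b, x ≥ 0, where A is the (2n−1) × n² constraint matrix whose first n rows encode the row-sum constraints Σ_j x_{ij} = 1 (i = 1,…,n) and whose remaining n−1 rows encode the column-sum constraints Σ_i x_{ij} = 1 (j = 1,…,n−1), and b is the all-ones vector in R^{2n−1}. Let f : R^{n×n} → R be continuous, quasi-convex, and integer-valued on the vertices of P. Let δ ∈ (0,1) be such that |f(x) − f(y)| < 1/2 whenever x is a vertex of P and ‖x − y‖ < δ (Frobenius norm). Let 0 < t < δ/(n(2n−1)), and let P'(t) be the perturbed polytope described by A·vec(x) = b', x ≥ 0, where b'_i = 1 − t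 for the first n components and b'_i = 1 for the remaining n−1 components. Suppose B* is a basis of A whose basic feasible solution x* for right-hand side b' maximizes f over P'(t). Then the basic solution x̂ of the system with right-hand side b corresponding to the same basis B* is feasible (x̂ ∈ P) and f(x̂) = max_{x ∈ P} f(x). -/
/-!
The Birkhoff constraint matrix is the incidence matrix of a bipartite graph, hence totally
unimodular, so the inverse of the basis matrix `B` has entries in `{0, ±1}`. Therefore
`x̂ = B⁻¹ b` is integral and differs from `x* = B⁻¹ b'` by at most `n t < 1` in each
coordinate; as `x* ≥ 0`, this forces `x̂ ≥ 0`, so `x̂` is a vertex of `P` within `δ` of `x*`.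
Every vertex `v` of `P` is within `δ` of a point `y` of `P'(t)`, whence
`f v < f y + 1/2 ≤ f x* + 1/2 < f x̂ + 1`, and integrality gives `f v ≤ f x̂`. Since `f` is
quasi-convex and continuous, Krein–Milman turns this into `f ≤ f x̂` on all of `P`.
-/

open Matrix

namespace Matrix

variable {m n : Type*}

section CommRing

variable {R : Type*} [CommRing R]

/-- Incidence matrix of a bipartite graph with vertex classes `top` and its complement. -/
def IsBipartiteIncidence (M : Matrix m n R) (top : m → Prop) : Prop :=
  (∀ i j, M i j = 0 ∨ M i j = 1) ∧
    ∀ j i i', M i j ≠ 0 → M i' j ≠ 0 → (top i ↔ top i') → i = i'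

theorem IsBipartiteIncidence.submatrix {m' n' : Type*} {M : Matrix m n R} {top : m → Prop}
    (hM : M.IsBipartiteIncidence top) {f : m' → m} (hf : f.Injective) (g : n' → n) :
    (M.submatrix f g).IsBipartiteIncidence (top ∘ f) :=
  ⟨fun i j => hM.1 (f i) (g j), fun j i i' hi hi' h => hf (hM.2 (g j) (f i) (f i') hi hi' h)⟩

theorem IsBipartiteIncidence.det_eq_zero [IsDomain R] [Fintype m] [DecidableEq m] [Nonempty m]
    {M : Matrix m m R} {top : m → Prop} (hM : M.IsBipartiteIncidence top)
    (hcol : ∀ j i₀, ∃ i ≠ i₀, M i j ≠ 0) : M.det = 0 := by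
  classical
  have hentry : ∀ i j, M i j ≠ 0 → M i j = 1 := fun i j h => (hM.1 i j).resolve_left h
  rw [← exists_vecMul_eq_zero_iff]
  refine ⟨fun i => if top i then 1 else -1, fun h => ?_, funext fun j => ?_⟩
  · have := congrFun h (Classical.arbitrary m)
    split_ifs at this <;> simp_all
  -- column `j` has exactly two `1`s, one in a top row and one in another row, so the signed
  -- sum of the rows vanishes there
  obtain ⟨i₁, -, h₁⟩ := hcol j (Classical.arbitrary m)
  obtain ⟨i₂, h₂₁, h₂⟩ := hcol j i₁
  have hsep : ¬(top i₁ ↔ top i₂) := fun h => h₂₁ (hM.2 j i₂ i₁ h₂ h₁ h.symm)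
  have hothers : ∀ i, i ≠ i₁ ∧ i ≠ i₂ → M i j = 0 := by
    rintro i ⟨hi₁, hi₂⟩
    by_contra hi
    by_cases h : top i ↔ top i₁
    · exact hi₁ (hM.2 j i i₁ hi h₁ h)
    · exact hi₂ (hM.2 j i i₂ hi h₂ (by tauto))
  rw [vecMul, dotProduct, Fintype.sum_eq_add i₁ i₂ h₂₁.symm
    (fun i hi => by rw [hothers i hi, mul_zero]), hentry _ _ h₁, hentry _ _ h₂]
  by_cases h : top i₁ <;> simp_all

theorem IsBipartiteIncidence.det_mem_range_signTypeCast [IsDomain R] {k : ℕ}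
    {M : Matrix (Fin k) (Fin k) R} {top : Fin k → Prop} (hM : M.IsBipartiteIncidence top) :
    M.det ∈ Set.range SignType.cast := by
  induction k with
  | zero => exact ⟨1, by simp⟩
  | succ k ih =>
    by_cases hcol : ∀ j i₀, ∃ i ≠ i₀, M i j ≠ 0
    · exact ⟨0, by rw [hM.det_eq_zero hcol, SignType.coe_zero]⟩
    push Not at hcol
    obtain ⟨j, i₀, hj⟩ := hcol
    rw [det_succ_column M j, Finset.sum_eq_single i₀ (fun i _ hi => by rw [hj i hi]; ring)
      (by simp)]
    obtain ⟨s, hs⟩ := ih (hM.submatrix (Fin.succAbove_right_injective (p := i₀)) j.succAbove)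
    obtain ⟨e, he⟩ : M i₀ j ∈ Set.range SignType.cast := by
      rcases hM.1 i₀ j with h | h
      · exact ⟨0, by simp [h]⟩
      · exact ⟨1, by simp [h]⟩
    exact ⟨(-1) ^ ((i₀ : ℕ) + j) * e * s, by simp [he, hs]⟩

theorem IsBipartiteIncidence.isTotallyUnimodular [IsDomain R] {M : Matrix m n R}
    {top : m → Prop} (hM : M.IsBipartiteIncidence top) : M.IsTotallyUnimodular :=
  fun _ _ _ hf _ => (hM.submatrix hf _).det_mem_range_signTypeCast

theorem IsTotallyUnimodular.inv_apply_mem_range_signTypeCast [Fintype n] [DecidableEq n]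
    {M : Matrix n n R} (hM : M.IsTotallyUnimodular) (i j : n) :
    M⁻¹ i j ∈ Set.range SignType.cast := by
  obtain ⟨d, hd⟩ : M.det ∈ Set.range SignType.cast := by
    simpa using (isTotallyUnimodular_iff_fintype M).1 hM n id id
  have hinv : Ring.inverse M.det = M.det := by
    rw [← hd]
    rcases d with _ | _ | _
    · simp
    · simpa using Ring.inverse_unit (-1 : Rˣ)
    · simp
  -- each entry of the adjugate is a square minor of `M` stacked on top of `1`
  obtain ⟨a, ha⟩ : M.adjugate i j ∈ Set.range SignType.cast := by
    have : M.updateRow j (Pi.single i 1) =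
        (fromRows M 1).submatrix (Function.update Sum.inl j (Sum.inr i)) id := by
      ext k l
      by_cases hk : k = j
      · subst hk; simp [Pi.single_apply, one_apply, eq_comm]
      · simp [hk]
    rw [adjugate_apply, this]
    exact (isTotallyUnimodular_iff_fintype _).1
      ((fromRows_one_isTotallyUnimodular_iff M).2 hM) n _ _
  exact ⟨d * a, by rw [inv_def, smul_apply, smul_eq_mul, hinv, ← hd, ← ha, SignType.coe_mul]⟩

theorem IsTotallyUnimodular.inv_mulVec_apply_mem_bot [Fintype n] [DecidableEq n]
    {M : Matrix n n R} (hM : M.IsTotallyUnimodular) {c : n → R}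
    (hc : ∀ j, c j ∈ (⊥ : Subring R)) (i : n) : (M⁻¹ *ᵥ c) i ∈ (⊥ : Subring R) := by
  refine Subring.sum_mem _ fun j _ => Subring.mul_mem _ ?_ (hc j)
  obtain ⟨s, hs⟩ := hM.inv_apply_mem_range_signTypeCast i j
  exact Subring.mem_bot.2 ⟨s, by rw [SignType.intCast_cast]; exact hs⟩

theorem mulVec_eq_submatrix_mulVec_comp [Fintype m] [Fintype n] (A : Matrix m n R) {π : m → n}
    (hπ : π.Injective) {x : n → R} (hx : ∀ q ∉ Set.range π, x q = 0) :
    A *ᵥ x = A.submatrix id π *ᵥ (x ∘ π) :=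
  funext fun r => (Fintype.sum_of_injective π hπ _ _ (fun q hq => by rw [hx q hq, mul_zero])
    fun _ => rfl).symm

variable [Fintype m] [DecidableEq m]

def IsBasicSolution (A : Matrix m n R) (π : m → n) (c : m → R) (x : n → R) : Prop :=
  (∀ i, x (π i) = ((A.submatrix id π)⁻¹ *ᵥ c) i) ∧ ∀ q ∉ Set.range π, x q = 0

variable {A : Matrix m n R} {π : m → n} {c : m → R} {x : n → R}

theorem IsBasicSolution.mulVec_eq [Fintype n] (hx : A.IsBasicSolution π c x)
    (hπ : π.Injective) (hB : IsUnit (A.submatrix id π).det) : A *ᵥ x = c := by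
  have hbasic : x ∘ π = _ := funext hx.1
  rw [mulVec_eq_submatrix_mulVec_comp A hπ hx.2, hbasic, mulVec_mulVec, mul_nonsing_inv _ hB,
    one_mulVec]

theorem IsTotallyUnimodular.isBasicSolution_apply_mem_bot (hA : A.IsTotallyUnimodular)
    (hc : ∀ r, c r ∈ (⊥ : Subring R)) (hx : A.IsBasicSolution π c x) (p : n) :
    x p ∈ (⊥ : Subring R) := by
  by_cases hp : p ∈ Set.range π
  · obtain ⟨i, rfl⟩ := hp
    rw [hx.1]
    exact (hA.submatrix id π).inv_mulVec_apply_mem_bot hc i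
  · rw [hx.2 p hp]
    exact zero_mem _

end CommRing

theorem IsTotallyUnimodular.abs_inv_mulVec_sub_le [Fintype n] [DecidableEq n]
    {M : Matrix n n ℝ} (hM : M.IsTotallyUnimodular) (c c' : n → ℝ) (i : n) :
    |(M⁻¹ *ᵥ c) i - (M⁻¹ *ᵥ c') i| ≤ ∑ j, |c j - c' j| := by
  rw [← Pi.sub_apply, ← mulVec_sub, mulVec, dotProduct]
  refine (Finset.abs_sum_le_sum_abs _ _).trans (Finset.sum_le_sum fun j _ => ?_)
  obtain ⟨s, hs⟩ := hM.inv_apply_mem_range_signTypeCast i j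
  rw [abs_mul, Pi.sub_apply, ← hs]
  exact mul_le_of_le_one_left (abs_nonneg _) (by cases s <;> simp)

theorem IsTotallyUnimodular.abs_sub_le_of_isBasicSolution [Fintype m] [DecidableEq m]
    {A : Matrix m n ℝ} (hA : A.IsTotallyUnimodular) {π : m → n} {c c' : m → ℝ}
    {x x' : n → ℝ} (hx : A.IsBasicSolution π c x) (hx' : A.IsBasicSolution π c' x') (p : n) :
    |x p - x' p| ≤ ∑ r, |c r - c' r| := by
  by_cases hp : p ∈ Set.range π
  · obtain ⟨i, rfl⟩ := hp
    rw [hx.1, hx'.1]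
    exact (hA.submatrix id π).abs_inv_mulVec_sub_le c c' i
  · rw [hx.2 p hp, hx'.2 p hp, sub_zero, abs_zero]
    exact Finset.sum_nonneg fun _ _ => abs_nonneg _

variable [Fintype n]

def standardPolyhedron (A : Matrix m n ℝ) (c : m → ℝ) : Set (n → ℝ) :=
  {x | (∀ p, 0 ≤ x p) ∧ A *ᵥ x = c}

variable (A : Matrix m n ℝ) (c : m → ℝ)

theorem convex_standardPolyhedron : Convex ℝ (A.standardPolyhedron c) := by
  intro x hx y hy a b ha hb hab
  refine ⟨fun p => add_nonneg (mul_nonneg ha (hx.1 p)) (mul_nonneg hb (hy.1 p)), ?_⟩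
  rw [mulVec_add, mulVec_smul, mulVec_smul, hx.2, hy.2, ← add_smul, hab, one_smul]

theorem isClosed_standardPolyhedron : IsClosed (A.standardPolyhedron c) :=
  (isClosed_Ici (a := (0 : n → ℝ))).inter
    (isClosed_eq (continuous_const.matrix_mulVec continuous_id) continuous_const)

theorem mem_extremePoints_standardPolyhedron [Fintype m] [DecidableEq m] {π : m → n}
    (hπ : π.Injective) (hB : IsUnit (A.submatrix id π).det) {x : n → ℝ}
    (hx : x ∈ A.standardPolyhedron c) (hx0 : ∀ q ∉ Set.range π, x q = 0) :
    x ∈ (A.standardPolyhedron c).extremePoints ℝ := by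
  have huniq : ∀ y ∈ A.standardPolyhedron c, (∀ q ∉ Set.range π, y q = 0) → y = x := by
    intro y hy hy0
    have hπyx : y ∘ π = x ∘ π := by
      refine mulVec_injective_iff_isUnit.2 ((isUnit_iff_isUnit_det _).2 hB) ?_
      rw [← mulVec_eq_submatrix_mulVec_comp A hπ hy0, ← mulVec_eq_submatrix_mulVec_comp A hπ hx0,
        hy.2, hx.2]
    funext q
    by_cases hq : q ∈ Set.range π
    · obtain ⟨i, rfl⟩ := hq
      exact congrFun hπyx i
    · rw [hy0 q hq, hx0 q hq]
  refine ⟨hx, fun y hy z hz hseg => huniq y hy fun q hq => ?_⟩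
  obtain ⟨a, b, ha, hb, -, hxyz⟩ := hseg
  have hsum : a * y q + b * z q = 0 := by rw [← hx0 q hq, ← hxyz]; rfl
  have hay := ((add_eq_zero_iff_of_nonneg (mul_nonneg ha.le (hy.1 q))
    (mul_nonneg hb.le (hz.1 q))).1 hsum).1
  exact (mul_eq_zero.1 hay).resolve_left ha.ne'

end Matrix

theorem QuasiconvexOn.subset {𝕜 E β : Type*} [Semiring 𝕜] [PartialOrder 𝕜] [AddCommMonoid E]
    [LE β] [SMul 𝕜 E] {s t : Set E} {f : E → β} (hf : QuasiconvexOn 𝕜 t f) (hst : s ⊆ t)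
    (hs : Convex 𝕜 s) : QuasiconvexOn 𝕜 s f := fun r => by
  convert hs.inter (hf r) using 1
  ext x
  exact ⟨fun h => ⟨h.1, hst h.1, h.2⟩, fun h => ⟨h.1, h.2.2⟩⟩

theorem QuasiconvexOn.le_of_forall_extremePoints_le {E : Type*} [AddCommGroup E] [Module ℝ E]
    [TopologicalSpace E] [T2Space E] [IsTopologicalAddGroup E] [ContinuousSMul ℝ E]
    [LocallyConvexSpace ℝ E] {s : Set E} {f : E → ℝ} {a : ℝ} (hf : QuasiconvexOn ℝ s f)
    (hfc : ContinuousOn f s) (hs : IsCompact s) (hsc : Convex ℝ s)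
    (h : ∀ v ∈ s.extremePoints ℝ, f v ≤ a) : ∀ x ∈ s, f x ≤ a := by
  intro x hx
  rw [← closure_convexHull_extremePoints hs hsc] at hx
  have hhull : convexHull ℝ (s.extremePoints ℝ) ⊆ {x | x ∈ s ∧ f x ≤ a} :=
    convexHull_min (fun v hv => ⟨extremePoints_subset hv, h v hv⟩) (hf a)
  exact (closure_minimal hhull
    (hfc.preimage_isClosed_of_isClosed hs.isClosed isClosed_Iic) hx).2

theorem le_of_lt_add_one_of_mem_bot {a b : ℝ} (ha : a ∈ (⊥ : Subring ℝ))
    (hb : b ∈ (⊥ : Subring ℝ)) (h : a < b + 1) : a ≤ b := by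
  obtain ⟨i, rfl⟩ := Subring.mem_bot.1 ha
  obtain ⟨j, rfl⟩ := Subring.mem_bot.1 hb
  exact_mod_cast Int.lt_add_one_iff.1 (by exact_mod_cast h)

theorem sqrt_sum_sq_le_of_abs_le {ι : Type*} [Fintype ι] {g : ι → ℝ} {ε : ℝ} (hε : 0 ≤ ε)
    (hg : ∀ i, |g i| ≤ ε) : √(∑ i, g i ^ 2) ≤ √(Fintype.card ι) * ε := by
  rw [← Real.sqrt_sq hε, ← Real.sqrt_mul (Nat.cast_nonneg _)]
  refine Real.sqrt_le_sqrt ?_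
  calc ∑ i, g i ^ 2 ≤ ∑ _i : ι, ε ^ 2 :=
        Finset.sum_le_sum fun i _ => sq_le_sq.2 ((hg i).trans (le_abs_self ε))
    _ = Fintype.card ι * ε ^ 2 := by simp

section Birkhoff

variable {n : ℕ}

def birkhoffConstraintMatrix (n : ℕ) : Matrix (Fin (2 * n - 1)) (Fin n × Fin n) ℝ :=
  of fun r p => if (r : ℕ) < n then (if (p.1 : ℕ) = (r : ℕ) then 1 else 0)
    else (if (p.2 : ℕ) = (r : ℕ) - n then 1 else 0)

def birkhoffPerturbedRhs (n : ℕ) (t : ℝ) : Fin (2 * n - 1) → ℝ :=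
  fun r => if (r : ℕ) < n then 1 - t else 1

theorem birkhoffConstraintMatrix_isBipartiteIncidence (n : ℕ) :
    (birkhoffConstraintMatrix n).IsBipartiteIncidence fun r => (r : ℕ) < n := by
  refine ⟨fun r p => ?_, fun p r r' hr hr' hrr' => Fin.ext ?_⟩
  · simp only [birkhoffConstraintMatrix, of_apply]
    split_ifs <;> simp
  · simp only [birkhoffConstraintMatrix, of_apply] at hr hr'
    split_ifs at hr hr' <;> grind

theorem birkhoffConstraintMatrix_mulVec_of_row (x : Fin n × Fin n → ℝ) {r : Fin (2 * n - 1)}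
    (i : Fin n) (hi : (i : ℕ) = r) : (birkhoffConstraintMatrix n *ᵥ x) r = ∑ j, x (i, j) := by
  have hr : (r : ℕ) < n := hi ▸ i.isLt
  simp only [mulVec, dotProduct, birkhoffConstraintMatrix, of_apply, ← hi, Fin.val_inj,
    ite_mul, one_mul, zero_mul, Fintype.sum_prod_type]
  exact (Fintype.sum_eq_single i fun a ha => by simp [ha]).trans (by simp)

theorem birkhoffConstraintMatrix_mulVec_of_col (x : Fin n × Fin n → ℝ) {r : Fin (2 * n - 1)}
    (j : Fin n) (hj : (j : ℕ) + n = r) : (birkhoffConstraintMatrix n *ᵥ x) r = ∑ i, x (i, j) := by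
  simp [mulVec, dotProduct, birkhoffConstraintMatrix, Fintype.sum_prod_type, ← hj,
    Fin.val_inj]

theorem le_one_of_mem_birkhoffPolytope {x : Fin n × Fin n → ℝ}
    (hx : x ∈ (birkhoffConstraintMatrix n).standardPolyhedron 1) (p : Fin n × Fin n) :
    x p ≤ 1 := by
  have hrow := congrFun hx.2 ⟨p.1, by have := p.1.isLt; omega⟩
  rw [birkhoffConstraintMatrix_mulVec_of_row x p.1 rfl, Pi.one_apply] at hrow
  exact hrow ▸ Finset.single_le_sum (fun j _ => hx.1 (p.1, j)) (Finset.mem_univ p.2)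

theorem isCompact_birkhoffPolytope (n : ℕ) :
    IsCompact ((birkhoffConstraintMatrix n).standardPolyhedron 1) :=
  (isCompact_univ_pi fun _ => isCompact_Icc (a := (0 : ℝ)) (b := 1)).of_isClosed_subset
    (isClosed_standardPolyhedron _ _)
    fun _ hx => Set.mem_univ_pi.2 fun p => ⟨hx.1 p, le_one_of_mem_birkhoffPolytope hx p⟩

theorem sum_abs_one_sub_birkhoffPerturbedRhs_le {t : ℝ} (ht : 0 ≤ t) :
    ∑ r, |(1 : Fin (2 * n - 1) → ℝ) r - birkhoffPerturbedRhs n t r| ≤ n * t := by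
  have hterm (r : Fin (2 * n - 1)) :
      |(1 : Fin (2 * n - 1) → ℝ) r - birkhoffPerturbedRhs n t r| =
        if (r : ℕ) < n then t else 0 := by
    simp only [birkhoffPerturbedRhs, Pi.one_apply]
    split_ifs <;> simp [abs_of_nonneg ht]
  rw [Finset.sum_congr rfl fun r _ => hterm r, Finset.sum_ite, Finset.sum_const_zero, add_zero,
    Finset.sum_const, nsmul_eq_mul, Fin.card_filter_val_lt]
  gcongr
  exact_mod_cast min_le_right _ _

theorem exists_mem_birkhoffPerturbed_abs_sub_le {t : ℝ} (ht : 0 ≤ t) (hnt : n * t ≤ 1)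
    {v : Fin n × Fin n → ℝ} (hv : v ∈ (birkhoffConstraintMatrix n).standardPolyhedron 1) :
    ∃ y ∈ (birkhoffConstraintMatrix n).standardPolyhedron (birkhoffPerturbedRhs n t),
      ∀ p, |v p - y p| ≤ n * t := by
  -- `w` has row sums `1 - 1/n` and column sums `1` on the constrained columns, so moving `v`
  -- towards `w` by `n t` lowers the row sums by `t` and keeps those column sums
  set w : Fin n × Fin n → ℝ := fun p => if (p.2 : ℕ) < n - 1 then (n : ℝ)⁻¹ else 0
  have hw : ∀ p, 0 ≤ w p ∧ w p ≤ 1 := by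
    intro p
    have : (1 : ℝ) ≤ n := Nat.one_le_cast.2 p.1.pos
    simp only [w]
    split_ifs
    · exact ⟨by positivity, inv_le_one_of_one_le₀ this⟩
    · simp
  have hAw : birkhoffConstraintMatrix n *ᵥ w =
      fun r : Fin (2 * n - 1) => if (r : ℕ) < n then 1 - (n : ℝ)⁻¹ else 1 := by
    funext r
    by_cases hr : (r : ℕ) < n
    · rw [birkhoffConstraintMatrix_mulVec_of_row w ⟨r, hr⟩ rfl, if_pos hr]
      simp only [w, Finset.sum_ite, Finset.sum_const, nsmul_eq_mul, mul_zero, add_zero,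
        Fin.card_filter_val_lt, min_eq_right (Nat.sub_le n 1)]
      rw [Nat.cast_sub (by omega), Nat.cast_one, sub_mul, one_mul,
        mul_inv_cancel₀ (Nat.cast_ne_zero.2 (by omega))]
    · have hj : (r : ℕ) - n < n - 1 := by omega
      rw [birkhoffConstraintMatrix_mulVec_of_col w ⟨r - n, by omega⟩ (by simp; omega),
        if_neg hr]
      have hn0 : (n : ℝ) ≠ 0 := Nat.cast_ne_zero.2 (by omega)
      simp [w, hj, hn0]
  refine ⟨(1 - n * t) • v + (n * t) • w, ⟨fun p => ?_, ?_⟩, fun p => ?_⟩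
  · exact add_nonneg (mul_nonneg (by linarith) (hv.1 p)) (mul_nonneg (by positivity) (hw p).1)
  · rw [mulVec_add, mulVec_smul, mulVec_smul, hv.2, hAw]
    funext r
    simp only [birkhoffPerturbedRhs, Pi.add_apply, Pi.smul_apply, Pi.one_apply, smul_eq_mul]
    split_ifs with hr
    · have : (n : ℝ) ≠ 0 := Nat.cast_ne_zero.2 (by omega)
      field_simp
      ring
    · ring
  · have hvw : |v p - w p| ≤ 1 := abs_sub_le_iff.2
      ⟨by linarith [(hw p).1, le_one_of_mem_birkhoffPolytope hv p], by linarith [(hw p).2, hv.1 p]⟩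
    calc |v p - ((1 - n * t) • v + (n * t) • w) p| = n * t * |v p - w p| := by
          simp only [Pi.add_apply, Pi.smul_apply, smul_eq_mul]
          rw [show v p - _ = n * t * (v p - w p) by ring, abs_mul, abs_of_nonneg (by positivity)]
      _ ≤ n * t := mul_le_of_le_one_right (by positivity) hvw

end Birkhoff

/-- **Optimal Basis Theorem.** Let `P` be the Birkhoff polytope described by
`A x = b, x ≥ 0`, where `A` is the `(2n-1) × n²` constraint matrix (the `n` row-sum
constraints followed by the first `n-1` column-sum constraints) and `b` is the
all-ones vector.  Let `f` be continuous, quasi-convex and integer valued on the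
vertices of `P`, let `δ ∈ (0,1)` be such that `|f x - f y| < 1/2` whenever `x` is a
vertex of `P` and `‖x - y‖ < δ`, and let `0 < t < δ/(n(2n-1))`.  If `B*` is a basis
of `A` whose basic feasible solution `x*` for the perturbed right-hand side `b'`
maximizes `f` over the perturbed polytope `P'(t)`, then the basic solution `x̂` for
the right-hand side `b` corresponding to the same basis is feasible (`x̂ ∈ P`) and
maximizes `f` over `P`. -/
theorem optimal_basis_theorem
    (n : ℕ) (hn : 1 ≤ n)
    (A : Matrix (Fin (2 * n - 1)) (Fin n × Fin n) ℝ)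
    (hA : ∀ r p, A r p =
      if (r : ℕ) < n then (if (p.1 : ℕ) = (r : ℕ) then 1 else 0)
      else (if (p.2 : ℕ) = (r : ℕ) - n then 1 else 0))
    (b b' : Fin (2 * n - 1) → ℝ)
    (hb : ∀ r, b r = 1)
    (t δ : ℝ) (hδ : δ ∈ Set.Ioo (0 : ℝ) 1)
    (ht : 0 < t) (ht' : t < δ / (n * (2 * n - 1)))
    (hb' : ∀ r, b' r = if (r : ℕ) < n then 1 - t else 1)
    (P P' : Set (Fin n × Fin n → ℝ))
    (hP : P = {x | (∀ p, 0 ≤ x p) ∧ A *ᵥ x = b})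
    (hP' : P' = {x | (∀ p, 0 ≤ x p) ∧ A *ᵥ x = b'})
    (f : (Fin n × Fin n → ℝ) → ℝ)
    (hf_cont : Continuous f)
    (hf_qc : QuasiconvexOn ℝ Set.univ f)
    (hf_int : ∀ x ∈ Set.extremePoints ℝ P, ∃ k : ℤ, f x = (k : ℝ))
    (hδf : ∀ x ∈ Set.extremePoints ℝ P, ∀ y,
      Real.sqrt (∑ p, (x p - y p) ^ 2) < δ → |f x - f y| < 1 / 2)
    (π : Fin (2 * n - 1) → Fin n × Fin n) (hπ : Function.Injective π)
    (B : Matrix (Fin (2 * n - 1)) (Fin (2 * n - 1)) ℝ)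
    (hB : B = A.submatrix id π) (hBdet : IsUnit B.det)
    (xstar : Fin n × Fin n → ℝ)
    (hxstar_basic : ∀ i, xstar (π i) = (B⁻¹ *ᵥ b') i)
    (hxstar_nonbasic : ∀ q, q ∉ Set.range π → xstar q = 0)
    (hxstar_feas : xstar ∈ P')
    (hxstar_max : ∀ y ∈ P', f y ≤ f xstar)
    (xhat : Fin n × Fin n → ℝ)
    (hxhat_basic : ∀ i, xhat (π i) = (B⁻¹ *ᵥ b) i)
    (hxhat_nonbasic : ∀ q, q ∉ Set.range π → xhat q = 0) :
    xhat ∈ P ∧ ∀ y ∈ P, f y ≤ f xhat := by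
  obtain rfl : A = birkhoffConstraintMatrix n := Matrix.ext hA
  obtain rfl : b = 1 := funext hb
  obtain rfl : b' = birkhoffPerturbedRhs n t := funext hb'
  subst hP hP' hB
  have hn' : (1 : ℝ) ≤ n := Nat.one_le_cast.2 hn
  have hnnt : n * (n * t) < δ := by
    rw [lt_div_iff₀ (by nlinarith)] at ht'
    nlinarith [mul_nonneg (mul_nonneg (Nat.cast_nonneg n) ht.le) (sub_nonneg.2 hn')]
  have hnt : n * t < 1 := by nlinarith [hδ.2]
  have hdist (x y : Fin n × Fin n → ℝ) (hxy : ∀ p, |x p - y p| ≤ n * t) :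
      √(∑ p, (x p - y p) ^ 2) < δ :=
    (sqrt_sum_sq_le_of_abs_le (by positivity) hxy).trans_lt (by simpa using hnnt)
  have hTU := (birkhoffConstraintMatrix_isBipartiteIncidence n).isTotallyUnimodular
  have hxhat : (birkhoffConstraintMatrix n).IsBasicSolution π 1 xhat :=
    ⟨hxhat_basic, hxhat_nonbasic⟩
  have hclose (p : Fin n × Fin n) : |xhat p - xstar p| ≤ n * t :=
    (hTU.abs_sub_le_of_isBasicSolution hxhat ⟨hxstar_basic, hxstar_nonbasic⟩ p).trans
      (sum_abs_one_sub_birkhoffPerturbedRhs_le ht.le)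
  have hxhatP : xhat ∈ (birkhoffConstraintMatrix n).standardPolyhedron 1 :=
    ⟨fun p => le_of_lt_add_one_of_mem_bot (zero_mem _)
      (hTU.isBasicSolution_apply_mem_bot (fun _ => one_mem _) hxhat p)
      (by linarith [(abs_le.1 (hclose p)).1, hxstar_feas.1 p]),
    hxhat.mulVec_eq hπ hBdet⟩
  have hext := mem_extremePoints_standardPolyhedron _ _ hπ hBdet hxhatP hxhat_nonbasic
  have hfx := abs_lt.1 (hδf _ hext _ (hdist _ _ hclose))
  obtain ⟨k, hk⟩ := hf_int xhat hext
  refine ⟨hxhatP, (hf_qc.subset (Set.subset_univ _) (convex_standardPolyhedron _ _))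
    |>.le_of_forall_extremePoints_le hf_cont.continuousOn (isCompact_birkhoffPolytope n)
      (convex_standardPolyhedron _ _) fun v hv => ?_⟩
  obtain ⟨y, hy, hvy⟩ :=
    exists_mem_birkhoffPerturbed_abs_sub_le ht.le hnt.le (extremePoints_subset hv)
  obtain ⟨l, hl⟩ := hf_int v hv
  have hfv := abs_lt.1 (hδf v hv y (hdist _ _ hvy))
  exact le_of_lt_add_one_of_mem_bot (Subring.mem_bot.2 ⟨l, hl.symm⟩)
    (Subring.mem_bot.2 ⟨k, hk.symm⟩) (by linarith [hxstar_max y hy])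
end

section
/- Let E¹ and E² be the (symmetric 0-1) adjacency matrices of two simple undirected graphs on n vertices, and let Q be the real symmetric n²×n² matrix such that trace((E¹x)ᵀ (x E²)) = vec(x)ᵀ Q vec(x) for all x ∈ R^{n×n}. Let λ = max{|λⁱ| : λⁱ is an eigenvalue of Q} and let μ > λ. Then a matrix x* maximizes vec(x)ᵀ[Q + μI]vec(x) over the Birkhoff polytope if and only if x* is an n×n permutation matrix that maximizes trace((E¹x)ᵀ (x E²)) over all n×n permutation matrices. -/
/-!
Since `μ` exceeds the absolute value of every eigenvalue of the symmetric matrix `Q`, the matrix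
`Q + μ I` is positive definite, so `g` is strictly convex. A strictly convex function maximized over
a convex hull is maximized only at the generating points (a maximizer that is not extreme would
lie strictly below the average of two values), and by Birkhoff's theorem the generating points of
the doubly stochastic matrices are the permutation matrices. Finally, all permutation matrices have
squared Frobenius norm `n`, so on them `g` is the graph matching objective plus the constant `μ n`.
-/

open Matrix Set

section MaximumPrinciple

variable {𝕜 E β : Type*} [Field 𝕜] [LinearOrder 𝕜] [IsStrictOrderedRing 𝕜] [AddCommGroup E]
  [AddCommGroup β] [LinearOrder β] [IsOrderedAddMonoid β] [Module 𝕜 E]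
  [Module 𝕜 β] [IsStrictOrderedModule 𝕜 β] {s t : Set E} {f : E → β} {x : E}

theorem StrictConvexOn.mem_extremePoints_of_isMaxOn (hf : StrictConvexOn 𝕜 s f)
    (hfx : IsMaxOn f s x) (hx : x ∈ s) : x ∈ s.extremePoints 𝕜 := by
  refine ⟨hx, fun x₁ hx₁ x₂ hx₂ hxseg => ?_⟩
  by_contra hx₁x
  have hne : x₁ ≠ x₂ := by
    rintro rfl
    rw [openSegment_same] at hxseg
    exact hx₁x hxseg.symm
  obtain ⟨a, b, ha, hb, hab, rfl⟩ := hxseg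
  refine lt_irrefl (f (a • x₁ + b • x₂)) ?_
  calc
    f (a • x₁ + b • x₂) < a • f x₁ + b • f x₂ := hf.2 hx₁ hx₂ hne ha hb hab
    _ ≤ a • f (a • x₁ + b • x₂) + b • f (a • x₁ + b • x₂) := by
      gcongr; exacts [hfx hx₁, hfx hx₂]
    _ = f (a • x₁ + b • x₂) := by rw [← add_smul, hab, one_smul]

theorem StrictConvexOn.isMaxOn_convexHull_iff (hf : StrictConvexOn 𝕜 (convexHull 𝕜 t) f) :
    x ∈ convexHull 𝕜 t ∧ IsMaxOn f (convexHull 𝕜 t) x ↔ x ∈ t ∧ IsMaxOn f t x := by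
  constructor
  · rintro ⟨hx, hfx⟩
    exact ⟨extremePoints_convexHull_subset (hf.mem_extremePoints_of_isMaxOn hfx hx),
      hfx.on_subset (subset_convexHull 𝕜 t)⟩
  · rintro ⟨hx, hfx⟩
    refine ⟨subset_convexHull 𝕜 t hx, fun y hy => ?_⟩
    obtain ⟨z, hz, hyz⟩ := hf.convexOn.exists_ge_of_mem_convexHull (subset_convexHull 𝕜 t) hy
    exact hyz.trans (hfx hz)

end MaximumPrinciple

theorem StrictConvexOn.comp_linearMap_of_injective {𝕜 E F β : Type*} [Semiring 𝕜]
    [PartialOrder 𝕜] [AddCommMonoid E] [AddCommMonoid F] [AddCommMonoid β] [PartialOrder β]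
    [Module 𝕜 E] [Module 𝕜 F] [SMul 𝕜 β] {f : F → β} {s : Set F} (hf : StrictConvexOn 𝕜 s f)
    (g : E →ₗ[𝕜] F) (hg : Function.Injective g) : StrictConvexOn 𝕜 (g ⁻¹' s) (f ∘ g) :=
  ⟨hf.1.linear_preimage _, fun x hx y hy hxy a b ha hb hab =>
    calc
      f (g (a • x + b • y)) = f (a • g x + b • g y) := by rw [g.map_add, g.map_smul, g.map_smul]
      _ < a • f (g x) + b • f (g y) := hf.2 hx hy (hg.ne hxy) ha hb hab⟩

namespace Matrix

variable {ι : Type*} [Fintype ι]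

theorem dotProduct_mulVec_add_smul_sub {A : Matrix ι ι ℝ} (hA : A.IsSymm) (v w : ι → ℝ)
    {a b : ℝ} (hab : a + b = 1) :
    (a • v + b • w) ⬝ᵥ A *ᵥ (a • v + b • w) =
      a * (v ⬝ᵥ A *ᵥ v) + b * (w ⬝ᵥ A *ᵥ w) - a * b * ((v - w) ⬝ᵥ A *ᵥ (v - w)) := by
  obtain rfl : b = 1 - a := by linarith
  have hvw : w ⬝ᵥ A *ᵥ v = v ⬝ᵥ A *ᵥ w := by
    rw [dotProduct_mulVec, ← mulVec_transpose, hA.eq, dotProduct_comm]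
  simp only [mulVec_add, mulVec_sub, mulVec_smul, dotProduct_add, add_dotProduct,
    dotProduct_sub, sub_dotProduct, smul_dotProduct, dotProduct_smul, smul_eq_mul, hvw]
  ring

theorem PosDef.strictConvexOn_dotProduct_mulVec {A : Matrix ι ι ℝ} (hA : A.PosDef) :
    StrictConvexOn ℝ univ fun v => v ⬝ᵥ A *ᵥ v := by
  refine ⟨convex_univ, fun v _ w _ hvw a b ha hb hab => ?_⟩
  have hpos : 0 < (v - w) ⬝ᵥ A *ᵥ (v - w) := hA.dotProduct_mulVec_pos (sub_ne_zero.2 hvw)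
  simp only [smul_eq_mul]
  rw [dotProduct_mulVec_add_smul_sub (isHermitian_iff_isSymm.1 hA.isHermitian) v w hab]
  nlinarith [mul_pos (mul_pos ha hb) hpos]

theorem IsHermitian.posDef_of_eigenvalue_pos [DecidableEq ι] {A : Matrix ι ι ℝ}
    (hA : A.IsHermitian) (h : ∀ (c : ℝ) (v : ι → ℝ), v ≠ 0 → A *ᵥ v = c • v → 0 < c) :
    A.PosDef :=
  hA.posDef_iff_eigenvalues_pos.2 fun i =>
    h _ _ ((hA.eigenvectorBasis.orthonormal.ne_zero i) ∘ (WithLp.ofLp_eq_zero 2).1)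
      (hA.mulVec_eigenvectorBasis i)

theorem IsSymm.posDef_add_smul_one [DecidableEq ι] {Q : Matrix ι ι ℝ} (hQ : Q.IsSymm)
    {μ : ℝ} (hμ : ∀ c : ℝ, (∃ v : ι → ℝ, v ≠ 0 ∧ Q *ᵥ v = c • v) → |c| < μ) :
    (Q + μ • 1).PosDef := by
  have hsymm : (Q + μ • 1).IsHermitian := isHermitian_iff_isSymm.2 (hQ.add (isSymm_one.smul μ))
  refine hsymm.posDef_of_eigenvalue_pos fun c v hv hcv => ?_
  have hQv : Q *ᵥ v = (c - μ) • v := by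
    rw [add_mulVec, smul_mulVec, one_mulVec] at hcv
    rw [sub_smul, ← hcv, add_sub_cancel_right]
  linarith [(abs_lt.1 (hμ (c - μ) ⟨v, hv, hQv⟩)).1]

end Matrix

namespace Equiv.Perm

variable {n R : Type*} [DecidableEq n]

theorem permMatrix_apply [Zero R] [One R] (σ : Perm n) (i j : n) :
    σ.permMatrix R i j = if σ i = j then 1 else 0 := by
  simp [permMatrix, PEquiv.toMatrix_apply, eq_comm]

theorem exists_permMatrix_eq_iff [Zero R] [One R] {x : Matrix n n R} :
    (∃ σ : Perm n, σ.permMatrix R = x) ↔ ∃ σ : Perm n, ∀ i j, x i j = if σ i = j then 1 else 0 :=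
  exists_congr fun σ => by rw [eq_comm, ← Matrix.ext_iff]; simp only [permMatrix_apply]

theorem dotProduct_self_permMatrix [Fintype n] [NonAssocSemiring R] (σ : Perm n) :
    ((fun p : n × n => σ.permMatrix R p.1 p.2) ⬝ᵥ fun p => σ.permMatrix R p.1 p.2) =
      Fintype.card n := by
  change vec (σ.permMatrix R)ᵀ ⬝ᵥ vec (σ.permMatrix R)ᵀ = _
  rw [vec_dotProduct_vec, transpose_transpose, transpose_permMatrix, ← permMatrix_mul,
    inv_mul_cancel, permMatrix_one, trace_one]

end Equiv.Perm

theorem coe_doublyStochastic {n R : Type*} [Fintype n] [DecidableEq n] [Semiring R]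
    [PartialOrder R] [IsOrderedRing R] :
    (doublyStochastic R n : Set (Matrix n n R)) =
      {x | (∀ i j, 0 ≤ x i j) ∧ (∀ i, ∑ j, x i j = 1) ∧ ∀ j, ∑ i, x i j = 1} := by
  ext x
  simp [mem_doublyStochastic_iff_sum]

theorem graph_matching_convex_maximization_general
    (n : ℕ) (E1 E2 : Matrix (Fin n) (Fin n) ℝ)
    (Q : Matrix (Fin n × Fin n) (Fin n × Fin n) ℝ) (hQsymm : Q.IsSymm)
    (hQ : ∀ x : Matrix (Fin n) (Fin n) ℝ,
      Matrix.trace ((E1 * x)ᵀ * (x * E2)) =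
        (fun p : Fin n × Fin n => x p.1 p.2) ⬝ᵥ
          (Q *ᵥ fun p : Fin n × Fin n => x p.1 p.2))
    (μ : ℝ)
    (hμ : ∀ c : ℝ, (∃ v : Fin n × Fin n → ℝ, v ≠ 0 ∧ Q *ᵥ v = c • v) → |c| < μ)
    (P : Set (Matrix (Fin n) (Fin n) ℝ))
    (hP : P = {x | (∀ i j, 0 ≤ x i j) ∧ (∀ i, ∑ j, x i j = 1) ∧
      (∀ j, ∑ i, x i j = 1)})
    (g : Matrix (Fin n) (Fin n) ℝ → ℝ)
    (hg : ∀ x, g x = (fun p : Fin n × Fin n => x p.1 p.2) ⬝ᵥ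
      ((Q + μ • (1 : Matrix (Fin n × Fin n) (Fin n × Fin n) ℝ)) *ᵥ
        fun p : Fin n × Fin n => x p.1 p.2))
    (xstar : Matrix (Fin n) (Fin n) ℝ) :
    (xstar ∈ P ∧ ∀ y ∈ P, g y ≤ g xstar) ↔
      ((∃ σ : Equiv.Perm (Fin n), ∀ i j, xstar i j = if σ i = j then 1 else 0) ∧
        ∀ y : Matrix (Fin n) (Fin n) ℝ,
          (∃ σ : Equiv.Perm (Fin n), ∀ i j, y i j = if σ i = j then 1 else 0) →
          Matrix.trace ((E1 * y)ᵀ * (y * E2)) ≤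
            Matrix.trace ((E1 * xstar)ᵀ * (xstar * E2))) := by
  have hPS : P = convexHull ℝ {σ.permMatrix ℝ | σ : Equiv.Perm (Fin n)} := by
    rw [hP, ← coe_doublyStochastic, doublyStochastic_eq_convexHull_permMatrix]
  have hg_convex : StrictConvexOn ℝ P g := by
    have hg_comp : g = (fun v => v ⬝ᵥ (Q + μ • 1) *ᵥ v) ∘
        (LinearEquiv.curry ℝ ℝ (Fin n) (Fin n)).symm.toLinearMap := funext hg
    rw [hg_comp]
    have hquad := (hQsymm.posDef_add_smul_one hμ).strictConvexOn_dotProduct_mulVec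
    exact (hquad.comp_linearMap_of_injective _ (LinearEquiv.injective _)).subset (subset_univ _)
      (hPS ▸ convex_convexHull ℝ _)
  have hg_perm (σ : Equiv.Perm (Fin n)) :
      g (σ.permMatrix ℝ) = trace ((E1 * σ.permMatrix ℝ)ᵀ * (σ.permMatrix ℝ * E2)) + μ * n := by
    rw [hg, add_mulVec, smul_mulVec, one_mulVec, dotProduct_add, dotProduct_smul, ← hQ,
      σ.dotProduct_self_permMatrix, Fintype.card_fin, smul_eq_mul]
  subst hPS
  simp only [← Equiv.Perm.exists_permMatrix_eq_iff, ← isMaxOn_iff, hg_convex.isMaxOn_convexHull_iff]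
  refine and_congr_right ?_
  rintro ⟨σ, rfl⟩
  simp only [isMaxOn_iff, mem_ofPred_eq, forall_exists_index, forall_apply_eq_imp_iff, hg_perm,
    add_le_add_iff_right]

/-- Graph matching as convex maximization: for `μ` larger than the absolute value of
every eigenvalue of the symmetric matrix `Q` representing the quadratic form
`x ↦ trace((E¹x)ᵀ (x E²))`, a matrix `x*` maximizes `vec(x)ᵀ[Q + μI]vec(x)` over the
Birkhoff polytope if and only if `x*` is a permutation matrix maximizing
`trace((E¹x)ᵀ (x E²))` over all permutation matrices. -/
theorem graph_matching_convex_maximization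
    (n : ℕ) (E1 E2 : Matrix (Fin n) (Fin n) ℝ)
    (hE1symm : E1.IsSymm) (hE2symm : E2.IsSymm)
    (hE1entries : ∀ i j, E1 i j = 0 ∨ E1 i j = 1)
    (hE2entries : ∀ i j, E2 i j = 0 ∨ E2 i j = 1)
    (hE1diag : ∀ i, E1 i i = 0) (hE2diag : ∀ i, E2 i i = 0)
    (Q : Matrix (Fin n × Fin n) (Fin n × Fin n) ℝ) (hQsymm : Q.IsSymm)
    (hQ : ∀ x : Matrix (Fin n) (Fin n) ℝ,
      Matrix.trace ((E1 * x)ᵀ * (x * E2)) =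
        (fun p : Fin n × Fin n => x p.1 p.2) ⬝ᵥ
          (Q *ᵥ fun p : Fin n × Fin n => x p.1 p.2))
    (μ : ℝ)
    (hμ : ∀ c : ℝ, (∃ v : Fin n × Fin n → ℝ, v ≠ 0 ∧ Q *ᵥ v = c • v) → |c| < μ)
    (P : Set (Matrix (Fin n) (Fin n) ℝ))
    (hP : P = {x | (∀ i j, 0 ≤ x i j) ∧ (∀ i, ∑ j, x i j = 1) ∧
      (∀ j, ∑ i, x i j = 1)})
    (g : Matrix (Fin n) (Fin n) ℝ → ℝ)
    (hg : ∀ x, g x = (fun p : Fin n × Fin n => x p.1 p.2) ⬝ᵥ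
      ((Q + μ • (1 : Matrix (Fin n × Fin n) (Fin n × Fin n) ℝ)) *ᵥ
        fun p : Fin n × Fin n => x p.1 p.2))
    (xstar : Matrix (Fin n) (Fin n) ℝ) :
    (xstar ∈ P ∧ ∀ y ∈ P, g y ≤ g xstar) ↔
      ((∃ σ : Equiv.Perm (Fin n), ∀ i j, xstar i j = if σ i = j then 1 else 0) ∧
        ∀ y : Matrix (Fin n) (Fin n) ℝ,
          (∃ σ : Equiv.Perm (Fin n), ∀ i j, y i j = if σ i = j then 1 else 0) →
          Matrix.trace ((E1 * y)ᵀ * (y * E2)) ≤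
            Matrix.trace ((E1 * xstar)ᵀ * (xstar * E2))) :=
  graph_matching_convex_maximization_general n E1 E2 Q hQsymm hQ μ hμ P hP g hg xstar
end
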